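/- Let (D, ∅_D, I, J, R) be a string data bistructure over an alphabet A, and let ι(x) := I(∅_D, x) for x ∈ A (which equals J(∅_D, x)). Then for all d ∈ D and x ∈ A: (1) I(d, x) = J*(R(d), ι(x)), and (2) J(d, x) = I*(ι(x), R(d)); that is, each insertion map is determined by the other one together with the reading map. -/

import Mathlib

/-- A string data bistructure `(D, ∅_D, I, J, R)` over an alphabet `A`:
`(D, ∅_D, I, R)` is a right string data structure (with insertion map the left
fold `I*`), `(D, ∅_D, J, R)` is a left string data structure (with insertion
map the right fold `J*`), and `I` and `J` commute. -/
structure SDBistructure (A : Type*) (D : Type*) where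
  empty : D
  insI : D → A → D
  insJ : D → A → D
  read : D → List A
  read_insI_empty : ∀ x : A, read (insI empty x) = [x]
  foldI_read : ∀ d : D, (read d).foldl insI empty = d
  consI_surj : Function.Surjective (fun w : List A => w.foldl insI empty)
  read_insJ_empty : ∀ x : A, read (insJ empty x) = [x]
  foldJ_read : ∀ d : D, (read d).foldr (fun x e => insJ e x) empty = d
  consJ_surj : Function.Surjective
    (fun w : List A => w.foldr (fun x e => insJ e x) empty)
  read_inj : Function.Injective read
  read_empty : read empty = []
  comm : ∀ (d : D) (x y : A), insJ (insI d x) y = insI (insJ d y) x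

namespace SDBistructure

variable {A D : Type*}

/-- The product `d ⋆_I d' := I*(d, R d')`. -/
def starI (B : SDBistructure A D) (d d' : D) : D := (B.read d').foldl B.insI d

/-- The product `d ⋆_J d' := J*(R d', d)`. -/
def starJ (B : SDBistructure A D) (d d' : D) : D :=
  (B.read d').foldr (fun x e => B.insJ e x) d

end SDBistructure

namespace SDBistructure

variable {A D : Type*} (B : SDBistructure A D)

theorem insI_empty_eq_insJ_empty (x : A) : B.insI B.empty x = B.insJ B.empty x :=
  B.read_inj (by rw [B.read_insI_empty, B.read_insJ_empty])

@[simp]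
theorem starI_empty_left (d : D) : B.starI B.empty d = d :=
  B.foldI_read d

@[simp]
theorem starJ_empty_left (d : D) : B.starJ B.empty d = d :=
  B.foldJ_read d

theorem insI_starJ (e d : D) (x : A) : B.insI (B.starJ e d) x = B.starJ (B.insI e x) d := by
  unfold starJ
  induction B.read d generalizing e with
  | nil => rfl
  | cons a w ih => simp only [List.foldr_cons, ← B.comm, ih]

theorem insJ_starI (e d : D) (x : A) : B.insJ (B.starI e d) x = B.starI (B.insJ e x) d := by
  unfold starI
  induction B.read d generalizing e with
  | nil => rfl
  | cons a w ih => simp only [List.foldl_cons, B.comm, ih]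

theorem insI_eq_starJ (d : D) (x : A) : B.insI d x = B.starJ (B.insI B.empty x) d := by
  rw [← B.insI_starJ, starJ_empty_left]

theorem insJ_eq_starI (d : D) (x : A) : B.insJ d x = B.starI (B.insI B.empty x) d := by
  rw [B.insI_empty_eq_insJ_empty, ← B.insJ_starI, starI_empty_left]

end SDBistructure

/-- For a string data bistructure, with `ι(x) := I(∅_D, x)` (which equals
`J(∅_D, x)`), each insertion is determined by the other together with the
reading map: `I(d, x) = J*(R(d), ι(x))` and `J(d, x) = I*(ι(x), R(d))`. -/
theorem insertions_determine_each_other {A D : Type*} (B : SDBistructure A D) :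
    (∀ x : A, B.insI B.empty x = B.insJ B.empty x) ∧
    (∀ (d : D) (x : A),
      B.insI d x = (B.read d).foldr (fun a e => B.insJ e a) (B.insI B.empty x)) ∧
    (∀ (d : D) (x : A),
      B.insJ d x = (B.read d).foldl B.insI (B.insI B.empty x)) :=
  ⟨B.insI_empty_eq_insJ_empty, B.insI_eq_starJ, B.insJ_eq_starI⟩
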